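/- arXiv:2009.02979 — 3 statements merged into one kernel-verified Lean document; each statement's English description precedes it below -/
import Mathlib

section
/- The matrix Γ with entries Γ_{(i,j),(i,j)} = 3(ℓ-1)/(ℓ+1), Γ_{(i,j),(i,k)} = -3/(ℓ+1) (with sign conventions Γ_{(j,i),(r,s)} = -Γ_{(i,j),(r,s)}), and Γ_{(i,j),(r,s)} = 0 for i,j,r,s all distinct, is the inverse of the covariance matrix Σ with entries Σ_{(i,j),(i,j)} = 1, Σ_{(i,j),(j,k)} = -1/3, and Σ_{(i,j),(r,s)} = 0 for i,j,r,s distinct. -/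
open Finset Matrix

/-- Edges of the complete graph `K_ℓ`, oriented from smaller to larger index. -/
abbrev Edge (ℓ : ℕ) := {p : Fin ℓ × Fin ℓ // p.1 < p.2}

/-- The signed entry `Σ_{(a,b),(c,d)}` of the covariance matrix, with the
conventions `Σ_{(j,i),(r,s)} = -Σ_{(i,j),(r,s)}` and `Σ_{(i,j),(s,r)} = -Σ_{(i,j),(r,s)}`:
it is 1 on equal oriented edges, ±1/3 on edges sharing exactly one vertex,
and 0 on disjoint edges. -/
noncomputable def sigEntry {ℓ : ℕ} (a b c d : Fin ℓ) : ℝ :=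
  if a = c ∧ b = d then 1
  else if a = d ∧ b = c then -1
  else if a = c ∨ b = d then 1/3
  else if a = d ∨ b = c then -1/3
  else 0

/-- The covariance matrix `Σ` on the edge space of `K_ℓ`. -/
noncomputable def SigMat (ℓ : ℕ) : Matrix (Edge ℓ) (Edge ℓ) ℝ :=
  fun e f => sigEntry e.1.1 e.1.2 f.1.1 f.1.2

/-- The boundary (incidence) matrix of `K_ℓ`, sending the edge `(u,v)` to `u - v`. -/
noncomputable def bdry (ℓ : ℕ) : Matrix (Fin ℓ) (Edge ℓ) ℝ :=
  fun u e => if e.1.1 = u then 1 else if e.1.2 = u then -1 else 0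

/-- The cycle space of `K_ℓ`: the kernel of the boundary map. -/
noncomputable def cycleSpace (ℓ : ℕ) : Submodule ℝ (Edge ℓ → ℝ) :=
  LinearMap.ker (Matrix.toLin' (bdry ℓ))

/-- The star vector at vertex `i`: the sum of all outgoing edges `(i,j)`,
with the sign convention `(j,i) = -(i,j)`. -/
noncomputable def starVec (ℓ : ℕ) (i : Fin ℓ) : Edge ℓ → ℝ :=
  fun e => if e.1.1 = i then 1 else if e.1.2 = i then -1 else 0

/-- The cut space of `K_ℓ`: the span of the star vectors. -/
noncomputable def cutSpace (ℓ : ℕ) : Submodule ℝ (Edge ℓ → ℝ) :=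
  Submodule.span ℝ (Set.range (starVec ℓ))

/-- The antisymmetric extension of an edge-space vector to all ordered pairs,
with the convention `x_{(j,i)} = -x_{(i,j)}`. -/
noncomputable def extAS {ℓ : ℕ} (x : Edge ℓ → ℝ) (i j : Fin ℓ) : ℝ :=
  if h : i < j then x ⟨(i, j), h⟩ else if h : j < i then -x ⟨(j, i), h⟩ else 0

/-- The net signed flow out of vertex `i`. -/
noncomputable def flow {ℓ : ℕ} (x : Edge ℓ → ℝ) (i : Fin ℓ) : ℝ := ∑ j, extAS x i j

/-- The matrix `Γ` with entries `Γ_{(i,j),(i,j)} = 3(ℓ-1)/(ℓ+1)`,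
`Γ_{(i,j),(i,k)} = -3/(ℓ+1)` for shared-vertex edges (signs via the standard
convention), and 0 for disjoint edges. -/
noncomputable def gamEntry (ℓ : ℕ) (a b c d : Fin ℓ) : ℝ :=
  if a = c ∧ b = d then 3 * ((ℓ : ℝ) - 1) / ((ℓ : ℝ) + 1)
  else if a = d ∧ b = c then -(3 * ((ℓ : ℝ) - 1) / ((ℓ : ℝ) + 1))
  else if a = c ∨ b = d then -(3 / ((ℓ : ℝ) + 1))
  else if a = d ∨ b = c then 3 / ((ℓ : ℝ) + 1)
  else 0

noncomputable def GamMat (ℓ : ℕ) : Matrix (Edge ℓ) (Edge ℓ) ℝ :=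
  fun e f => gamEntry ℓ e.1.1 e.1.2 f.1.1 f.1.2

lemma bdry_eq {ℓ : ℕ} (u : Fin ℓ) (e : Edge ℓ) :
    bdry ℓ u e = (if e.1.1 = u then (1:ℝ) else 0) - (if e.1.2 = u then 1 else 0) := by
  have hne : e.1.1 ≠ e.1.2 := ne_of_lt e.2
  unfold bdry
  split_ifs with h1 h2 h2 <;> simp_all

lemma BtB {ℓ : ℕ} (e f : Edge ℓ) :
    ((bdry ℓ)ᵀ * bdry ℓ) e f =
      (if e.1.1 = f.1.1 then (1:ℝ) else 0) - (if e.1.1 = f.1.2 then 1 else 0)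
      - (if e.1.2 = f.1.1 then 1 else 0) + (if e.1.2 = f.1.2 then 1 else 0) := by
  rw [Matrix.mul_apply]
  simp only [Matrix.transpose_apply, bdry_eq]
  simp [sub_mul, mul_sub, Finset.sum_sub_distrib, ite_and, Finset.sum_ite_eq,
    mul_ite, ite_mul]
  ring

lemma sig_eq (ℓ : ℕ) : SigMat ℓ = (1/3 : ℝ) • (1 + (bdry ℓ)ᵀ * bdry ℓ) := by
  ext e f
  obtain ⟨⟨a,b⟩, hab⟩ := e; obtain ⟨⟨c,d⟩, hcd⟩ := f
  simp only [SigMat, Matrix.smul_apply, Matrix.add_apply, Matrix.one_apply, BtB,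
    Subtype.mk.injEq, Prod.mk.injEq, smul_eq_mul]
  simp only [Fin.lt_def] at hab hcd
  unfold sigEntry
  split_ifs <;>
    first
      | (exfalso; omega)
      | norm_num

lemma gam_eq (ℓ : ℕ) :
    GamMat ℓ = (3 : ℝ) • (1 : Matrix (Edge ℓ) (Edge ℓ) ℝ)
      - (3/((ℓ:ℝ)+1)) • ((bdry ℓ)ᵀ * bdry ℓ) := by
  have hx : (ℓ:ℝ) + 1 ≠ 0 := by positivity
  ext e f
  obtain ⟨⟨a,b⟩, hab⟩ := e; obtain ⟨⟨c,d⟩, hcd⟩ := f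
  simp only [GamMat, Matrix.smul_apply, Matrix.sub_apply, Matrix.one_apply, BtB,
    Subtype.mk.injEq, Prod.mk.injEq, smul_eq_mul]
  simp only [Fin.lt_def] at hab hcd
  unfold gamEntry
  split_ifs <;>
    first
      | (exfalso; omega)
      | (field_simp; ring)
      | field_simp

lemma sum_edge {ℓ : ℕ} (f : Fin ℓ → Fin ℓ → ℝ) (hsymm : ∀ i j, f j i = f i j)
    (hdiag : ∀ i, f i i = 0) :
    ∑ e : Edge ℓ, f e.1.1 e.1.2 = (1/2) * ∑ i, ∑ j, f i j := by
  have h1 : ∑ e : Edge ℓ, f e.1.1 e.1.2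
      = ∑ p ∈ Finset.univ.filter (fun p : Fin ℓ × Fin ℓ => p.1 < p.2), f p.1 p.2 := by
    rw [Finset.sum_subtype (p := fun p : Fin ℓ × Fin ℓ => p.1 < p.2) _ (by simp)
      (fun p : Fin ℓ × Fin ℓ => f p.1 p.2)]
  have h2 : ∑ p ∈ Finset.univ.filter (fun p : Fin ℓ × Fin ℓ => p.2 < p.1), f p.1 p.2
      = ∑ p ∈ Finset.univ.filter (fun p : Fin ℓ × Fin ℓ => p.1 < p.2), f p.1 p.2 := by
    apply Finset.sum_nbij' (fun p => Prod.swap p) (fun p => Prod.swap p) <;>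
      simp [hsymm]
  have h3 : ∑ i, ∑ j, f i j = ∑ p : Fin ℓ × Fin ℓ, f p.1 p.2 := by
    rw [Fintype.sum_prod_type]
  have h4 : ∑ p : Fin ℓ × Fin ℓ, f p.1 p.2
      = ∑ p ∈ Finset.univ.filter (fun p : Fin ℓ × Fin ℓ => p.1 < p.2), f p.1 p.2
      + ∑ p ∈ Finset.univ.filter (fun p : Fin ℓ × Fin ℓ => ¬ p.1 < p.2), f p.1 p.2 :=
    (Finset.sum_filter_add_sum_filter_not _ _ _).symm
  have h5 : ∑ p ∈ Finset.univ.filter (fun p : Fin ℓ × Fin ℓ => ¬ p.1 < p.2), f p.1 p.2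
      = ∑ p ∈ (Finset.univ.filter (fun p : Fin ℓ × Fin ℓ => ¬ p.1 < p.2)).filter
          (fun p => p.2 < p.1), f p.1 p.2
      + ∑ p ∈ (Finset.univ.filter (fun p : Fin ℓ × Fin ℓ => ¬ p.1 < p.2)).filter
          (fun p => ¬ p.2 < p.1), f p.1 p.2 :=
    (Finset.sum_filter_add_sum_filter_not _ _ _).symm
  have h6 : (Finset.univ.filter (fun p : Fin ℓ × Fin ℓ => ¬ p.1 < p.2)).filter
          (fun p => p.2 < p.1) = Finset.univ.filter (fun p : Fin ℓ × Fin ℓ => p.2 < p.1) := by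
    ext p; simp; omega
  have h7 : ∑ p ∈ (Finset.univ.filter (fun p : Fin ℓ × Fin ℓ => ¬ p.1 < p.2)).filter
          (fun p => ¬ p.2 < p.1), f p.1 p.2 = 0 := by
    apply Finset.sum_eq_zero
    intro p hp
    simp at hp
    have : p.1 = p.2 := le_antisymm hp.2 hp.1
    rw [this, hdiag]
  rw [h1, h3, h4, h5, h6, h2, h7]
  ring

lemma BBt {ℓ : ℕ} (u v : Fin ℓ) :
    (bdry ℓ * (bdry ℓ)ᵀ) u v = (if u = v then (ℓ:ℝ) else 0) - 1 := by
  rw [Matrix.mul_apply]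
  have key : ∀ e : Edge ℓ, bdry ℓ u e * (bdry ℓ)ᵀ e v
      = ((if e.1.1 = u then (1:ℝ) else 0) - (if e.1.2 = u then 1 else 0))
        * ((if e.1.1 = v then (1:ℝ) else 0) - (if e.1.2 = v then 1 else 0)) := by
    intro e
    simp only [Matrix.transpose_apply, bdry_eq]
  rw [Finset.sum_congr rfl (fun e _ => key e)]
  rw [sum_edge (fun i j => ((if i = u then (1:ℝ) else 0) - (if j = u then 1 else 0))
        * ((if i = v then (1:ℝ) else 0) - (if j = v then 1 else 0)))
      (by intro i j; ring) (by intro i; ring)]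
  simp [sub_mul, mul_sub, Finset.sum_sub_distrib, Finset.sum_ite_eq', mul_ite, ite_mul,
    eq_comm]
  split_ifs with h <;> ring

lemma BBt_mat (ℓ : ℕ) :
    bdry ℓ * (bdry ℓ)ᵀ = (ℓ:ℝ) • (1 : Matrix (Fin ℓ) (Fin ℓ) ℝ) - Matrix.of (fun _ _ => (1:ℝ)) := by
  ext u v
  rw [BBt]
  simp only [Matrix.sub_apply, Matrix.smul_apply, Matrix.one_apply, smul_eq_mul]
  split_ifs <;> simp

lemma ones_mul_bdry (ℓ : ℕ) :
    (Matrix.of (fun _ _ => (1:ℝ)) : Matrix (Fin ℓ) (Fin ℓ) ℝ) * bdry ℓ = 0 := by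
  ext u e
  simp [Matrix.mul_apply, bdry_eq, Finset.sum_sub_distrib, Finset.sum_ite_eq]

lemma M_sq (ℓ : ℕ) :
    ((bdry ℓ)ᵀ * bdry ℓ) * ((bdry ℓ)ᵀ * bdry ℓ) = (ℓ:ℝ) • ((bdry ℓ)ᵀ * bdry ℓ) := by
  have : ((bdry ℓ)ᵀ * bdry ℓ) * ((bdry ℓ)ᵀ * bdry ℓ)
      = (bdry ℓ)ᵀ * ((bdry ℓ * (bdry ℓ)ᵀ) * bdry ℓ) := by
    simp only [Matrix.mul_assoc]
  rw [this, BBt_mat, Matrix.sub_mul, Matrix.smul_mul, Matrix.one_mul, ones_mul_bdry,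
    sub_zero, Matrix.mul_smul]

/-- `Γ` is the inverse of the covariance matrix `Σ`. -/
theorem gam_inverse_sig {ℓ : ℕ} (hℓ : 2 ≤ ℓ) :
    GamMat ℓ * SigMat ℓ = 1 ∧ SigMat ℓ * GamMat ℓ = 1 := by
  have hx : (ℓ:ℝ) + 1 ≠ 0 := by positivity
  set M : Matrix (Edge ℓ) (Edge ℓ) ℝ := (bdry ℓ)ᵀ * bdry ℓ with hMdef
  have hM : M * M = (ℓ:ℝ) • M := M_sq ℓ
  have key1 : ((3:ℝ) • (1 : Matrix (Edge ℓ) (Edge ℓ) ℝ) - (3/((ℓ:ℝ)+1)) • M) * (1 + M)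
      = (3:ℝ) • 1 := by
    simp only [Matrix.sub_mul, Matrix.smul_mul, Matrix.one_mul, Matrix.mul_add,
      Matrix.mul_one, smul_add, hM, smul_smul]
    rw [show (3/((ℓ:ℝ)+1)) * (ℓ:ℝ) = 3 - 3/((ℓ:ℝ)+1) by field_simp; ring]
    module
  have key2 : (1 + M) * ((3:ℝ) • (1 : Matrix (Edge ℓ) (Edge ℓ) ℝ) - (3/((ℓ:ℝ)+1)) • M)
      = (3:ℝ) • 1 := by
    simp only [Matrix.mul_sub, Matrix.mul_smul, Matrix.one_mul, Matrix.add_mul,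
      Matrix.mul_one, smul_add, hM, smul_smul]
    rw [show (3/((ℓ:ℝ)+1)) * (ℓ:ℝ) = 3 - 3/((ℓ:ℝ)+1) by field_simp; ring]
    module
  rw [sig_eq, gam_eq, ← hMdef]
  constructor
  · rw [Matrix.mul_smul, key1, smul_smul]
    norm_num
  · rw [Matrix.smul_mul, key2, smul_smul]
    norm_num
end

section
/- Every element of the cycle space of the complete graph K_ℓ (oriented with edges (i,j) for i < j) is an eigenvector of the matrix Σ with eigenvalue 1/3, where Σ acts on the edge space with entries Σ_{(i,j),(i,j)} = 1, Σ_{(i,j),(i,k)} = 1/3 for distinct i,j,k, and Σ_{(i,j),(r,s)} = 0 for i,j,r,s all distinct (with the sign convention Σ_{(j,i),(r,s)} = -Σ_{(i,j),(r,s)}). -/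
open Finset Matrix

set_option maxHeartbeats 1000000

section Aux

variable {ℓ : ℕ}

lemma extAS_self (x : Edge ℓ → ℝ) (i : Fin ℓ) : extAS x i i = 0 := by
  simp [extAS]

lemma extAS_lt (x : Edge ℓ → ℝ) {i j : Fin ℓ} (h : i < j) :
    extAS x i j = x ⟨(i, j), h⟩ := by
  simp [extAS, h]

lemma extAS_swap (x : Edge ℓ → ℝ) (i j : Fin ℓ) : extAS x j i = - extAS x i j := by
  unfold extAS
  rcases lt_trichotomy i j with h | h | h
  · simp [h, h.asymm]
  · simp [h]
  · simp [h, h.asymm]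

lemma sum_edge_s5 (g : Fin ℓ × Fin ℓ → ℝ) :
    ∑ e : Edge ℓ, g e.1 =
      ∑ p ∈ univ.filter (fun p : Fin ℓ × Fin ℓ => p.1 < p.2), g p := by
  exact (Finset.sum_subtype (p := fun p : Fin ℓ × Fin ℓ => p.1 < p.2)
    (univ.filter fun p : Fin ℓ × Fin ℓ => p.1 < p.2) (fun p => by simp) g).symm

lemma half_sum (F : Fin ℓ → Fin ℓ → ℝ) (hsym : ∀ c d, F d c = F c d)
    (hdiag : ∀ c, F c c = 0) :
    ∑ p ∈ univ.filter (fun p : Fin ℓ × Fin ℓ => p.1 < p.2), F p.1 p.2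
      = (1/2) * ∑ c, ∑ d, F c d := by
  have hall : ∑ c, ∑ d, F c d = ∑ p : Fin ℓ × Fin ℓ, F p.1 p.2 := by
    rw [← Finset.sum_product']; rfl
  have hne : ∑ p ∈ univ.filter (fun p : Fin ℓ × Fin ℓ => p.1 ≠ p.2), F p.1 p.2
      = ∑ p : Fin ℓ × Fin ℓ, F p.1 p.2 := by
    apply Finset.sum_filter_of_ne
    intro p _ hp
    intro h
    exact hp (by rw [h]; exact hdiag p.2)
  have hun : (univ.filter (fun p : Fin ℓ × Fin ℓ => p.1 < p.2)) ∪
      (univ.filter (fun p : Fin ℓ × Fin ℓ => p.2 < p.1)) =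
      univ.filter (fun p : Fin ℓ × Fin ℓ => p.1 ≠ p.2) := by
    ext p
    simp only [Finset.mem_union, Finset.mem_filter, Finset.mem_univ, true_and]
    constructor
    · rintro (h | h)
      · exact ne_of_lt h
      · exact (ne_of_lt h).symm
    · intro h
      rcases lt_trichotomy p.1 p.2 with h' | h' | h'
      · exact Or.inl h'
      · exact absurd h' h
      · exact Or.inr h'
  have hdisj : Disjoint (univ.filter (fun p : Fin ℓ × Fin ℓ => p.1 < p.2))
      (univ.filter (fun p : Fin ℓ × Fin ℓ => p.2 < p.1)) := by
    rw [Finset.disjoint_filter]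
    intro p _ h1 h2
    exact h1.asymm h2
  have hswap : ∑ p ∈ univ.filter (fun p : Fin ℓ × Fin ℓ => p.2 < p.1), F p.1 p.2
      = ∑ p ∈ univ.filter (fun p : Fin ℓ × Fin ℓ => p.1 < p.2), F p.1 p.2 := by
    apply Finset.sum_nbij' (fun p => Prod.swap p) (fun p => Prod.swap p)
    · intro p hp; simp only [Finset.mem_filter, Finset.mem_univ, true_and] at hp ⊢
      exact hp
    · intro p hp; simp only [Finset.mem_filter, Finset.mem_univ, true_and] at hp ⊢
      exact hp
    · intro p _; simp
    · intro p _; simp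
    · intro p _; exact (hsym p.1 p.2).symm ▸ rfl
  have key : ∑ p ∈ univ.filter (fun p : Fin ℓ × Fin ℓ => p.1 < p.2), F p.1 p.2
      + ∑ p ∈ univ.filter (fun p : Fin ℓ × Fin ℓ => p.2 < p.1), F p.1 p.2
      = ∑ c, ∑ d, F c d := by
    rw [← Finset.sum_union hdisj, hun, hne, hall]
  rw [hswap] at key
  linarith

lemma flow_eq_zero (x : Edge ℓ → ℝ) (hx : x ∈ cycleSpace ℓ) (u : Fin ℓ) :
    flow x u = 0 := by
  have hb : (bdry ℓ).mulVec x u = 0 := by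
    have := (LinearMap.mem_ker.mp hx)
    have h2 : Matrix.toLin' (bdry ℓ) x = 0 := this
    rw [Matrix.toLin'_apply] at h2
    exact congrFun h2 u
  have hF : ∀ e : Edge ℓ, bdry ℓ u e * x e =
      (fun p : Fin ℓ × Fin ℓ =>
        (if p.1 = u then 1 else if p.2 = u then -1 else 0) * extAS x p.1 p.2) e.1 := by
    intro e
    simp only [bdry]
    rw [extAS_lt x e.2]
  have h3 : (bdry ℓ).mulVec x u = ∑ p ∈ univ.filter (fun p : Fin ℓ × Fin ℓ => p.1 < p.2),
      (if p.1 = u then 1 else if p.2 = u then -1 else 0) * extAS x p.1 p.2 := by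
    rw [Matrix.mulVec, dotProduct]
    rw [Finset.sum_congr rfl (fun e _ => hF e)]
    exact sum_edge_s5 (fun p : Fin ℓ × Fin ℓ =>
      (if p.1 = u then 1 else if p.2 = u then -1 else 0) * extAS x p.1 p.2)
  set F : Fin ℓ → Fin ℓ → ℝ := fun c d =>
    (if c = u then 1 else if d = u then -1 else 0) * extAS x c d with hFdef
  have hsym : ∀ c d, F d c = F c d := by
    intro c d
    simp only [hFdef]
    rw [extAS_swap x c d]
    by_cases hc : c = u <;> by_cases hd : d = u <;>
      simp [hc, hd, extAS_self] <;> ring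
  have hdiag : ∀ c, F c c = 0 := by
    intro c; simp [hFdef, extAS_self]
  have h4 : ∑ c, ∑ d, F c d = 2 * flow x u := by
    have hrow : ∀ c, ∑ d, F c d = extAS x u c + (if c = u then flow x u else 0) := by
      intro c
      by_cases hc : c = u
      · have h7 : ∀ d, F c d = extAS x c d := by
          intro d; simp [hFdef, hc]
        rw [Finset.sum_congr rfl (fun d _ => h7 d)]
        simp [hc, flow, extAS_self]
      · simp only [hFdef, if_neg hc]
        have : ∀ d, (if d = u then (-1 : ℝ) else 0) * extAS x c d
            = if d = u then -extAS x c d else 0 := by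
          intro d; by_cases hd : d = u <;> simp [hd]
        rw [Finset.sum_congr rfl (fun d _ => this d)]
        rw [Finset.sum_ite_eq' univ u (fun d => -extAS x c d)]
        simp [hc, ← extAS_swap x c u]
    rw [Finset.sum_congr rfl (fun c _ => hrow c)]
    rw [Finset.sum_add_distrib, Finset.sum_ite_eq' univ u (fun _ => flow x u)]
    simp [flow]
    ring
  have h5 := half_sum F hsym hdiag
  rw [h3] at hb
  rw [hb] at *
  rw [h4] at h5
  linarith [h5.symm]

lemma sig_decomp (x : Edge ℓ → ℝ) {a b : Fin ℓ} (hab : a ≠ b) (c d : Fin ℓ) :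
    sigEntry a b c d * extAS x c d =
      (1/3) * ((if c = a then extAS x c d else 0) - (if d = a then extAS x c d else 0)
        + (if d = b then extAS x c d else 0) - (if c = b then extAS x c d else 0)
        + (if c = a ∧ d = b then extAS x c d else 0)
        - (if c = b ∧ d = a then extAS x c d else 0)) := by
  by_cases hcd : c = d
  · subst hcd
    rw [extAS_self]
    simp
  by_cases h1 : c = a
  · subst h1
    by_cases h2 : d = b
    · subst h2
      simp [sigEntry, hab, hab.symm, hcd, Ne.symm hcd]
      try ring
    · simp [sigEntry, hab, hab.symm, hcd, Ne.symm hcd, h2, Ne.symm h2]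
      try ring
  by_cases h3 : c = b
  · subst h3
    by_cases h4 : d = a
    · subst h4
      simp [sigEntry, hab, hab.symm, hcd, Ne.symm hcd, h1, Ne.symm h1]
      try ring
    · simp [sigEntry, hab, hab.symm, hcd, Ne.symm hcd, h1, Ne.symm h1, h4, Ne.symm h4]
      try ring
  by_cases h5 : d = a
  · subst h5
    simp [sigEntry, hab, hab.symm, h1, Ne.symm h1, h3, Ne.symm h3]
    try ring
  by_cases h6 : d = b
  · subst h6
    simp [sigEntry, hab, hab.symm, h1, Ne.symm h1, h3, Ne.symm h3, h5, Ne.symm h5]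
    try ring
  · simp [sigEntry, h1, Ne.symm h1, h3, Ne.symm h3, h5, Ne.symm h5, h6, Ne.symm h6]

end Aux

/-- Every element of the cycle space of `K_ℓ` is an eigenvector of `Σ`
with eigenvalue `1/3`. -/
theorem cycle_space_eigenvector {ℓ : ℕ} (hℓ : 3 ≤ ℓ) (x : Edge ℓ → ℝ)
    (hx : x ∈ cycleSpace ℓ) :
    (SigMat ℓ).mulVec x = (1/3 : ℝ) • x := by
  funext e
  obtain ⟨⟨a, b⟩, hab⟩ := e
  have hne : a ≠ b := ne_of_lt hab
  have hmv : (SigMat ℓ).mulVec x ⟨(a, b), hab⟩ =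
      ∑ p ∈ univ.filter (fun p : Fin ℓ × Fin ℓ => p.1 < p.2),
        sigEntry a b p.1 p.2 * extAS x p.1 p.2 := by
    rw [Matrix.mulVec, dotProduct]
    have : ∀ f : Edge ℓ, SigMat ℓ ⟨(a, b), hab⟩ f * x f =
        (fun p : Fin ℓ × Fin ℓ => sigEntry a b p.1 p.2 * extAS x p.1 p.2) f.1 := by
      intro f
      simp only [SigMat]
      rw [extAS_lt x f.2]
    rw [Finset.sum_congr rfl (fun f _ => this f)]
    exact sum_edge_s5 (fun p : Fin ℓ × Fin ℓ => sigEntry a b p.1 p.2 * extAS x p.1 p.2)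
  set F : Fin ℓ → Fin ℓ → ℝ := fun c d => sigEntry a b c d * extAS x c d with hFdef
  have hsym : ∀ c d, F d c = F c d := by
    intro c d
    simp only [hFdef]
    rw [sig_decomp x hne d c, sig_decomp x hne c d, extAS_swap x c d]
    by_cases h1 : c = a <;> by_cases h2 : c = b <;> by_cases h3 : d = a <;>
      by_cases h4 : d = b <;> simp [h1, h2, h3, h4, hne, Ne.symm hne] <;> try ring
  have hdiag : ∀ c, F c c = 0 := by
    intro c; simp [hFdef, extAS_self]
  have hsum : ∑ c, ∑ d, F c d = (2/3) * extAS x a b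
      + (2/3) * flow x a - (2/3) * flow x b := by
    have hrw : ∀ c d, F c d =
        (1/3) * ((if c = a then extAS x c d else 0) - (if d = a then extAS x c d else 0)
          + (if d = b then extAS x c d else 0) - (if c = b then extAS x c d else 0)
          + (if c = a ∧ d = b then extAS x c d else 0)
          - (if c = b ∧ d = a then extAS x c d else 0)) := fun c d => sig_decomp x hne c d
    calc ∑ c, ∑ d, F c d = ∑ c, ∑ d, (1/3) * ((if c = a then extAS x c d else 0)
          - (if d = a then extAS x c d else 0)
          + (if d = b then extAS x c d else 0) - (if c = b then extAS x c d else 0)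
          + (if c = a ∧ d = b then extAS x c d else 0)
          - (if c = b ∧ d = a then extAS x c d else 0)) := by
          exact Finset.sum_congr rfl (fun c _ => Finset.sum_congr rfl (fun d _ => hrw c d))
    _ = (2/3) * extAS x a b + (2/3) * flow x a - (2/3) * flow x b := by
          simp only [mul_sub, mul_add, Finset.sum_sub_distrib, Finset.sum_add_distrib,
            ← Finset.mul_sum]
          have T1 : ∑ c, ∑ d, (if c = a then extAS x c d else 0) = flow x a := by
            have : ∀ c, ∑ d, (if c = a then extAS x c d else 0)
                = if c = a then flow x a else 0 := by
              intro c; by_cases hc : c = a <;> simp [hc, flow]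
            rw [Finset.sum_congr rfl (fun c _ => this c)]
            simp [Finset.sum_ite_eq']
          have T2 : ∑ c, ∑ d, (if d = a then extAS x c d else 0) = - flow x a := by
            have : ∀ c, ∑ d, (if d = a then extAS x c d else 0) = extAS x c a := by
              intro c; rw [Finset.sum_ite_eq' univ a (fun d => extAS x c d)]; simp
            rw [Finset.sum_congr rfl (fun c _ => this c)]
            have : ∀ c, extAS x c a = - extAS x a c := fun c => extAS_swap x a c
            rw [Finset.sum_congr rfl (fun c _ => this c)]
            simp [flow]
          have T3 : ∑ c, ∑ d, (if d = b then extAS x c d else 0) = - flow x b := by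
            have : ∀ c, ∑ d, (if d = b then extAS x c d else 0) = extAS x c b := by
              intro c; rw [Finset.sum_ite_eq' univ b (fun d => extAS x c d)]; simp
            rw [Finset.sum_congr rfl (fun c _ => this c)]
            have : ∀ c, extAS x c b = - extAS x b c := fun c => extAS_swap x b c
            rw [Finset.sum_congr rfl (fun c _ => this c)]
            simp [flow]
          have T4 : ∑ c, ∑ d, (if c = b then extAS x c d else 0) = flow x b := by
            have : ∀ c, ∑ d, (if c = b then extAS x c d else 0)
                = if c = b then flow x b else 0 := by
              intro c; by_cases hc : c = b <;> simp [hc, flow]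
            rw [Finset.sum_congr rfl (fun c _ => this c)]
            simp [Finset.sum_ite_eq']
          have T5 : ∑ c, ∑ d, (if c = a ∧ d = b then extAS x c d else 0)
              = extAS x a b := by
            have : ∀ c, ∑ d, (if c = a ∧ d = b then extAS x c d else 0)
                = if c = a then extAS x c b else 0 := by
              intro c
              by_cases hc : c = a
              · simp only [hc, true_and]
                rw [Finset.sum_ite_eq' univ b (fun d => extAS x a d)]
                simp
              · simp [hc]
            rw [Finset.sum_congr rfl (fun c _ => this c)]
            rw [Finset.sum_ite_eq' univ a (fun c => extAS x c b)]
            simp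
          have T6 : ∑ c, ∑ d, (if c = b ∧ d = a then extAS x c d else 0)
              = - extAS x a b := by
            have : ∀ c, ∑ d, (if c = b ∧ d = a then extAS x c d else 0)
                = if c = b then extAS x c a else 0 := by
              intro c
              by_cases hc : c = b
              · simp only [hc, true_and]
                rw [Finset.sum_ite_eq' univ a (fun d => extAS x b d)]
                simp
              · simp [hc]
            rw [Finset.sum_congr rfl (fun c _ => this c)]
            rw [Finset.sum_ite_eq' univ b (fun c => extAS x c a)]
            simp [extAS_swap x a b]
          rw [T1, T2, T3, T4, T5, T6]
          ring
  have hhalf := half_sum F hsym hdiag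
  rw [hmv]
  have hfa := flow_eq_zero x hx a
  have hfb := flow_eq_zero x hx b
  rw [hfa, hfb] at hsum
  rw [hsum] at hhalf
  rw [hhalf]
  rw [extAS_lt x hab]
  simp only [Pi.smul_apply, smul_eq_mul]
  ring
end

section
/- Every element of the cut space of the complete graph K_ℓ is an eigenvector of the matrix Σ (with entries as in the covariance matrix under the Impartial Culture assumption) with eigenvalue 1 + (ℓ-2)/3; in particular, for each vertex i, Σ · (Σ_{j≠i} (i,j)) = (1 + (ℓ-2)/3) · Σ_{j≠i} (i,j). -/
open Finset Matrix

/-! Writing `∂` for the vertex–edge incidence matrix `bdry ℓ`, one has `Σ = (∂ᵀ∂ + 1) / 3`, and the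
star vectors are the columns of `∂ᵀ`, so the cut space is the range of `∂ᵀ`. With `J` the all-ones matrix,
`∂∂ᵀ = ℓ • 1 - J` is the Laplacian of `K_ℓ` and `∂ᵀJ = 0` (every column of `∂` sums to zero),
so `Σ∂ᵀ = (ℓ • ∂ᵀ + ∂ᵀ) / 3 = (1 + (ℓ - 2) / 3) • ∂ᵀ`. -/

lemma bdry_apply {ℓ : ℕ} (u : Fin ℓ) (e : Edge ℓ) :
    bdry ℓ u e = (if e.1.1 = u then 1 else 0) - (if e.1.2 = u then 1 else 0) := by
  have := e.2.ne
  unfold bdry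
  split_ifs <;> simp_all

lemma starVec_eq_col (ℓ : ℕ) : starVec ℓ = (bdry ℓ)ᵀ.col := rfl

lemma cutSpace_eq_range (ℓ : ℕ) : cutSpace ℓ = LinearMap.range (bdry ℓ)ᵀ.mulVecLin := by
  rw [Matrix.range_mulVecLin, cutSpace, starVec_eq_col]

lemma sum_edge_s6 {M : Type*} [AddCommMonoid M] {ℓ : ℕ} (g : Fin ℓ → Fin ℓ → M) :
    ∑ e : Edge ℓ, g e.1.1 e.1.2 = ∑ c, ∑ d, if c < d then g c d else 0 := by
  rw [← Finset.sum_subtype (univ.filter fun p : Fin ℓ × Fin ℓ => p.1 < p.2) (by simp)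
    (fun p => g p.1 p.2), Finset.sum_filter, Fintype.sum_prod_type]

lemma two_mul_sum_edge_of_symm {R : Type*} [NonAssocSemiring R] {ℓ : ℕ} (g : Fin ℓ → Fin ℓ → R)
    (hsymm : ∀ c d, g c d = g d c) (hdiag : ∀ c, g c c = 0) :
    2 * ∑ e : Edge ℓ, g e.1.1 e.1.2 = ∑ c, ∑ d, g c d := by
  have hsplit : ∀ c d, g c d = (if c < d then g c d else 0) + (if d < c then g d c else 0) := by
    intro c d
    rcases lt_trichotomy c d with h | rfl | h
    · simp [h, h.not_gt]
    · simp [hdiag]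
    · simp [h, h.not_gt, hsymm c d]
  simp_rw [sum_edge_s6, two_mul]
  conv_rhs => rw [Finset.sum_congr rfl fun c _ => Finset.sum_congr rfl fun d _ => hsplit c d]
  simp only [Finset.sum_add_distrib]
  rw [Finset.sum_comm (f := fun c d => if d < c then g d c else 0)]

lemma bdry_mul_transpose (ℓ : ℕ) :
    bdry ℓ * (bdry ℓ)ᵀ = (ℓ : ℝ) • 1 - Matrix.of fun _ _ => 1 := by
  ext u v
  set g : Fin ℓ → Fin ℓ → ℝ := fun c d =>
    ((if c = u then 1 else 0) - (if d = u then 1 else 0)) *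
      ((if c = v then 1 else 0) - (if d = v then 1 else 0))
  have hedge : (bdry ℓ * (bdry ℓ)ᵀ) u v = ∑ e : Edge ℓ, g e.1.1 e.1.2 := by
    simp only [Matrix.mul_apply, Matrix.transpose_apply, bdry_apply, g]
  have hsum : ∑ c, ∑ d, g c d = 2 * ((if u = v then (ℓ : ℝ) else 0) - 1) := by
    simp only [g, sub_mul, mul_sub, ite_mul, one_mul, zero_mul, Finset.sum_sub_distrib]
    rcases eq_or_ne u v with rfl | huv
    · simp
      ring
    · norm_num [huv]
  have h := two_mul_sum_edge_of_symm g (fun c d => by ring) (fun c => by ring)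
  rw [← hedge, hsum] at h
  simp only [Matrix.sub_apply, Matrix.smul_apply, Matrix.one_apply, Matrix.of_apply, smul_eq_mul]
  split_ifs at h ⊢ <;> linarith

lemma transpose_bdry_mul_ones (ℓ : ℕ) :
    (bdry ℓ)ᵀ * (Matrix.of fun _ _ => 1 : Matrix (Fin ℓ) (Fin ℓ) ℝ) = 0 := by
  ext e v
  simp [Matrix.mul_apply, bdry_apply, Finset.sum_sub_distrib]

lemma transpose_bdry_mul_bdry_apply {ℓ : ℕ} (e f : Edge ℓ) :
    ((bdry ℓ)ᵀ * bdry ℓ) e f =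
      (if e.1.1 = f.1.1 then 1 else 0) - (if e.1.1 = f.1.2 then 1 else 0)
        - (if e.1.2 = f.1.1 then 1 else 0) + (if e.1.2 = f.1.2 then 1 else 0) := by
  simp [Matrix.mul_apply, bdry_apply, mul_sub, Finset.sum_sub_distrib]
  ring

lemma sigMat_eq (ℓ : ℕ) : SigMat ℓ = (1 / 3 : ℝ) • ((bdry ℓ)ᵀ * bdry ℓ + 1) := by
  ext ⟨⟨a, b⟩, hab⟩ ⟨⟨c, d⟩, hcd⟩
  simp only [SigMat, sigEntry, Matrix.smul_apply, Matrix.add_apply, transpose_bdry_mul_bdry_apply,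
    Matrix.one_apply, Subtype.mk.injEq, Prod.mk.injEq, smul_eq_mul]
  simp only [Fin.lt_def] at hab hcd
  split_ifs <;> simp only [Fin.ext_iff] at * <;> first | omega | norm_num

lemma sigMat_mul_transpose_bdry (ℓ : ℕ) :
    SigMat ℓ * (bdry ℓ)ᵀ = (1 + ((ℓ : ℝ) - 2) / 3) • (bdry ℓ)ᵀ := by
  rw [sigMat_eq, Matrix.smul_mul, Matrix.add_mul, Matrix.mul_assoc, bdry_mul_transpose,
    Matrix.mul_sub, transpose_bdry_mul_ones, Matrix.mul_smul, Matrix.mul_one, Matrix.one_mul, sub_zero]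
  module

lemma sigMat_mulVec_transpose_bdry_mulVec {ℓ : ℕ} (v : Fin ℓ → ℝ) :
    SigMat ℓ *ᵥ ((bdry ℓ)ᵀ *ᵥ v) = (1 + ((ℓ : ℝ) - 2) / 3) • ((bdry ℓ)ᵀ *ᵥ v) := by
  rw [Matrix.mulVec_mulVec, sigMat_mul_transpose_bdry, Matrix.smul_mulVec]

theorem cut_space_eigenvector_general {ℓ : ℕ} :
    (∀ x ∈ cutSpace ℓ, (SigMat ℓ).mulVec x = (1 + ((ℓ : ℝ) - 2) / 3) • x) ∧
    (∀ i : Fin ℓ, (SigMat ℓ).mulVec (starVec ℓ i) = (1 + ((ℓ : ℝ) - 2) / 3) • starVec ℓ i) := by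
  refine ⟨fun x hx => ?_, fun i => ?_⟩
  · rw [cutSpace_eq_range] at hx
    obtain ⟨v, rfl⟩ := hx
    exact sigMat_mulVec_transpose_bdry_mulVec v
  · rw [starVec_eq_col, ← Matrix.mulVec_single_one]
    exact sigMat_mulVec_transpose_bdry_mulVec _

/-- Every element of the cut space of `K_ℓ` is an eigenvector of `Σ` with
eigenvalue `1 + (ℓ-2)/3`; in particular this holds for each star vector
`Σ_{j≠i} (i,j)`. -/
theorem cut_space_eigenvector {ℓ : ℕ} (hℓ : 2 ≤ ℓ) :
    (∀ x ∈ cutSpace ℓ, (SigMat ℓ).mulVec x = (1 + ((ℓ : ℝ) - 2) / 3) • x) ∧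
    (∀ i : Fin ℓ, (SigMat ℓ).mulVec (starVec ℓ i) = (1 + ((ℓ : ℝ) - 2) / 3) • starVec ℓ i) :=
  cut_space_eigenvector_general
end
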